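/- For the quadratic MSE function M(α1, α2) = Ȳ²·f1·[Cy² + Cp1²·(α1² - 2α1·K1) + Cp2²·(α2² - 2α2·K2 + 2α1·α2·Kφ)], assuming Cp1 > 0, Cp2 > 0, f1 > 0, Ȳ ≠ 0, and Cp1² - Kφ²·Cp2² > 0, the gradient equations Cp1²·α1 + Kφ·Cp2²·α2 = K1·Cp1² and α2 + Kφ·α1 = K2 have a unique solution, namely α1 = (K1·Cp1² - K2·Kφ·Cp2²)/(Cp1² - Kφ²·Cp2²) and α2 = K2 - Kφ·α1, and it is the global minimum of M. -/
import Mathlib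


theorem stmt_1 (Ybar f1 Cy Cp1 Cp2 K1 K2 Kphi : ℝ) (hY : Ybar ≠ 0) (hf1 : f1 > 0)
    (hC1 : Cp1 > 0) (hC2 : Cp2 > 0) (hpd : Cp1 ^ 2 - Kphi ^ 2 * Cp2 ^ 2 > 0) :
    let M : ℝ → ℝ → ℝ := fun a1 a2 =>
      Ybar ^ 2 * f1 * (Cy ^ 2 + Cp1 ^ 2 * (a1 ^ 2 - 2 * a1 * K1)
        + Cp2 ^ 2 * (a2 ^ 2 - 2 * a2 * K2 + 2 * a1 * a2 * Kphi))
    let a1s := (K1 * Cp1 ^ 2 - K2 * Kphi * Cp2 ^ 2) / (Cp1 ^ 2 - Kphi ^ 2 * Cp2 ^ 2)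
    let a2s := K2 - Kphi * a1s
    (Cp1 ^ 2 * a1s + Kphi * Cp2 ^ 2 * a2s = K1 * Cp1 ^ 2 ∧ a2s + Kphi * a1s = K2) ∧
    (∀ a1 a2 : ℝ,
      (Cp1 ^ 2 * a1 + Kphi * Cp2 ^ 2 * a2 = K1 * Cp1 ^ 2 ∧ a2 + Kphi * a1 = K2) →
      a1 = a1s ∧ a2 = a2s) ∧
    (∀ a1 a2 : ℝ, M a1s a2s ≤ M a1 a2) := by
  intro M a1s a2s
  have hd : Cp1 ^ 2 - Kphi ^ 2 * Cp2 ^ 2 ≠ 0 := ne_of_gt hpd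
  have ha1s : a1s * (Cp1 ^ 2 - Kphi ^ 2 * Cp2 ^ 2) = K1 * Cp1 ^ 2 - K2 * Kphi * Cp2 ^ 2 := by
    simp only [a1s]; field_simp
  have h1 : Cp1 ^ 2 * a1s + Kphi * Cp2 ^ 2 * a2s = K1 * Cp1 ^ 2 := by
    simp only [a2s]; linear_combination ha1s
  have h2 : a2s + Kphi * a1s = K2 := by simp only [a2s]; ring
  refine ⟨⟨h1, h2⟩, ?_, ?_⟩
  · intro a1 a2 ⟨g1, g2⟩
    have e1 : a1 = a1s := by
      have h : a1 * (Cp1 ^ 2 - Kphi ^ 2 * Cp2 ^ 2) = K1 * Cp1 ^ 2 - K2 * Kphi * Cp2 ^ 2 := by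
        linear_combination g1 - Kphi * Cp2 ^ 2 * g2
      exact mul_right_cancel₀ hd (h.trans ha1s.symm)
    refine ⟨e1, ?_⟩
    rw [e1] at g2
    simp only [a2s]; linarith
  · intro a1 a2
    have hY2 : Ybar ^ 2 * f1 > 0 := by positivity
    simp only [M]
    have key : Cy ^ 2 + Cp1 ^ 2 * (a1 ^ 2 - 2 * a1 * K1)
        + Cp2 ^ 2 * (a2 ^ 2 - 2 * a2 * K2 + 2 * a1 * a2 * Kphi)
        - (Cy ^ 2 + Cp1 ^ 2 * (a1s ^ 2 - 2 * a1s * K1)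
        + Cp2 ^ 2 * (a2s ^ 2 - 2 * a2s * K2 + 2 * a1s * a2s * Kphi))
        = (Cp1 ^ 2 - Kphi ^ 2 * Cp2 ^ 2) * (a1 - a1s) ^ 2
          + Cp2 ^ 2 * (a2 - a2s + Kphi * (a1 - a1s)) ^ 2 := by
      linear_combination (2 * (a1 - a1s)) * h1 + (2 * Cp2 ^ 2 * (a2 - a2s)) * h2
    have hnn : 0 ≤ (Cp1 ^ 2 - Kphi ^ 2 * Cp2 ^ 2) * (a1 - a1s) ^ 2
        + Cp2 ^ 2 * (a2 - a2s + Kphi * (a1 - a1s)) ^ 2 :=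
      add_nonneg (mul_nonneg hpd.le (sq_nonneg _)) (mul_nonneg (sq_nonneg _) (sq_nonneg _))
    nlinarith [mul_nonneg hY2.le hnn, mul_le_mul_of_nonneg_left (le_of_eq key.symm) hY2.le,
      mul_le_mul_of_nonneg_left (le_of_eq key) hY2.le]
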